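/- arXiv:solv-int/9912016 — 2 statements merged into one kernel-verified Lean document; each statement's English description precedes it below -/
import Mathlib

section
/- Let L = P^m + a_{m−1}P^{m−1} + ⋯ + a_1 P + a_0 + a_{−1}P^{−1} + a_{−2}P^{−2} + ⋯ be a Laurent series in P^{−1} with smooth coefficients, let φ(T) be a smooth function independent of P, and set L̃ := e^{−ad φ}L. Then L̃_{≥1} = e^{−ad φ}(L_{≥0}) − L_{≥0}|_{P=φ_X}, where L_{≥0}|_{P=φ_X} := φ_X^m + a_{m−1}φ_X^{m−1} + ⋯ + a_1 φ_X + a_0 is the polynomial part of L evaluated at P = φ_X. -/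
namespace DMKP

/-- Coefficient functions of a formal Laurent series in `P⁻¹` with time variables
`T = (T₁, …, T_N)`: `A n` is the coefficient of `P^n`. -/
abbrev Coeffs (N : ℕ) := ℤ → (Fin N → ℝ) → ℝ

variable {N : ℕ}

/-- Partial derivative in the direction of the `q`-th time variable. -/
noncomputable def pd (q : Fin N) (f : (Fin N → ℝ) → ℝ) : (Fin N → ℝ) → ℝ :=
  fun x => fderiv ℝ f x (Pi.single q 1)

/-- Finitely many positive powers of `P`. -/
def BddPow (A : Coeffs N) : Prop := ∃ m : ℤ, ∀ n : ℤ, m < n → A n = 0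

/-- All coefficients are smooth functions of the time variables. -/
def SmoothCoeffs (A : Coeffs N) : Prop := ∀ n : ℤ, ContDiff ℝ (⊤ : ℕ∞) (A n)

/-- A Laurent series in `P⁻¹` with smooth coefficients. -/
def IsLaurent (A : Coeffs N) : Prop := BddPow A ∧ SmoothCoeffs A

/-- Termwise `∂_P`. -/
def dP (A : Coeffs N) : Coeffs N := fun n x => ((n + 1 : ℤ) : ℝ) * A (n + 1) x

/-- Termwise `∂_{T_q}`. -/
noncomputable def dT (q : Fin N) (A : Coeffs N) : Coeffs N := fun n => pd q (A n)

/-- Termwise `∂_X`, where `X = T₁`. -/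
noncomputable def dX [NeZero N] (A : Coeffs N) : Coeffs N := dT 0 A

/-- Termwise product of Laurent series. -/
noncomputable def mul (A B : Coeffs N) : Coeffs N := fun n x => ∑' i : ℤ, A i x * B (n - i) x

/-- The Poisson bracket `{f,g} = f_P g_X - f_X g_P`. -/
noncomputable def pb [NeZero N] (A B : Coeffs N) : Coeffs N :=
  fun n x => mul (dP A) (dX B) n x - mul (dX A) (dP B) n x

/-- Truncation keeping only powers `P^n` with `n ≥ k`. -/
def truncGe (k : ℤ) (A : Coeffs N) : Coeffs N := fun n => if k ≤ n then A n else 0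

/-- Truncation keeping only powers `P^n` with `n ≤ k`. -/
def truncLe (k : ℤ) (A : Coeffs N) : Coeffs N := fun n => if n ≤ k then A n else 0

/-- The residue: coefficient of `P⁻¹`. -/
def res (A : Coeffs N) : (Fin N → ℝ) → ℝ := A (-1)

/-- The constant Laurent series `1`. -/
def one' : Coeffs N := fun n => if n = 0 then (fun _ => (1 : ℝ)) else 0

/-- `powC A q` is the `q`-th power `A^q`. -/
noncomputable def powC (A : Coeffs N) : ℕ → Coeffs N
  | 0 => one'
  | q + 1 => mul A (powC A q)

/-- `e^{-ad φ} A = Σ_{k≥0} (1/k!) (φ_X)^k ∂_P^k A`. -/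
noncomputable def expAdNeg [NeZero N] (φ : (Fin N → ℝ) → ℝ) (A : Coeffs N) : Coeffs N :=
  fun n x => ∑' k : ℕ, (pd 0 φ x) ^ k / (Nat.factorial k : ℝ) * (dP^[k] A) n x

/-- `e^{ad φ} A = Σ_{k≥0} (1/k!) (-φ_X)^k ∂_P^k A`. -/
noncomputable def expAdPos [NeZero N] (φ : (Fin N → ℝ) → ℝ) (A : Coeffs N) : Coeffs N :=
  fun n x => ∑' k : ℕ, (-(pd 0 φ x)) ^ k / (Nat.factorial k : ℝ) * (dP^[k] A) n x

/-- A `P`-independent function viewed as a Laurent series concentrated at `P^0`. -/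
def const (φ : (Fin N → ℝ) → ℝ) : Coeffs N := fun n => if n = 0 then φ else 0

/-- Evaluation of the polynomial (non-negative) part of `A` at `P = φ_X`. -/
noncomputable def evalAtPhiX [NeZero N] (A : Coeffs N) (φ : (Fin N → ℝ) → ℝ) :
    (Fin N → ℝ) → ℝ :=
  fun x => ∑' k : ℕ, A (k : ℤ) x * (pd 0 φ x) ^ k

/-- The shape `λ = P + U₂ P⁻¹ + U₃ P⁻² + ⋯` of the dKP Lax function. -/
def IsDKPShape (lam : Coeffs N) : Prop :=
  (lam 1 = fun _ => (1 : ℝ)) ∧ lam 0 = 0 ∧ ∀ n : ℤ, 2 ≤ n → lam n = 0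

/-- The shape `μ = P + V₀ + V₁ P⁻¹ + ⋯` of the dmKP Lax function. -/
def IsDMKPShape (mu : Coeffs N) : Prop :=
  (mu 1 = fun _ => (1 : ℝ)) ∧ ∀ n : ℤ, 2 ≤ n → mu n = 0


lemma dP_iter {N : ℕ} (A : Coeffs N) (k : ℕ) (n : ℤ) (x : Fin N → ℝ) :
    (dP^[k] A) n x = (∏ j ∈ Finset.range k, ((n + j + 1 : ℤ) : ℝ)) * A (n + k) x := by
  induction k generalizing A with
  | zero => simp
  | succ k ih =>
      rw [Function.iterate_succ_apply, ih, Finset.prod_range_succ]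
      simp only [dP]
      have h : n + ((k : ℤ) + 1) = n + k + 1 := by ring
      push_cast
      rw [h]
      ring

/-- Lemma 1: for `L = P^m + a_{m-1}P^{m-1} + ⋯` and `L̃ = e^{-ad φ}L`,
`L̃_{≥1} = e^{-ad φ}(L_{≥0}) - L_{≥0}|_{P=φ_X}`. -/
theorem statement1 {N : ℕ} [NeZero N] (m : ℕ) (L : Coeffs N)
    (hmonic : L (m : ℤ) = fun _ => (1 : ℝ)) (hbd : ∀ n : ℤ, (m : ℤ) < n → L n = 0)
    (hsm : SmoothCoeffs L)
    (φ : (Fin N → ℝ) → ℝ) (hφ : ContDiff ℝ (⊤ : ℕ∞) φ) :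
    truncGe 1 (expAdNeg φ L)
      = fun n x => expAdNeg φ (truncGe 0 L) n x - const (evalAtPhiX L φ) n x := by
  funext n x
  rcases lt_trichotomy n 0 with hn | hn | hn
  · -- n < 0
    have h1 : ¬ (1 : ℤ) ≤ n := by omega
    have h0 : n ≠ 0 := by omega
    have hl : truncGe 1 (expAdNeg φ L) n x = 0 := by simp [truncGe, h1]
    have hc : const (evalAtPhiX L φ) n x = 0 := by simp [const, h0]
    rw [hl, hc, sub_zero, eq_comm]
    simp only [expAdNeg]
    have hz : ∀ k : ℕ, pd 0 φ x ^ k / (Nat.factorial k : ℝ) *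
        (dP^[k] (truncGe 0 L)) n x = 0 := by
      intro k
      rw [dP_iter]
      rcases lt_or_ge (n + (k : ℤ)) 0 with h | h
      · have ht : truncGe 0 L (n + k) x = 0 := by
          simp [truncGe, not_le.mpr h]
        rw [ht, mul_zero, mul_zero]
      · have hmem : (-n - 1).toNat ∈ Finset.range k := by
          simp only [Finset.mem_range]
          omega
        have hz0 : ((n + ((-n - 1).toNat : ℤ) + 1 : ℤ) : ℝ) = 0 := by
          have h2 : ((-n - 1).toNat : ℤ) = -n - 1 := by omega
          rw [h2]; push_cast; ring
        have hp : (∏ j ∈ Finset.range k, ((n + j + 1 : ℤ) : ℝ)) = 0 :=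
          Finset.prod_eq_zero hmem hz0
        rw [hp, zero_mul, mul_zero]
    exact (tsum_congr hz).trans tsum_zero
  · -- n = 0
    subst hn
    have hl : truncGe 1 (expAdNeg φ L) 0 x = 0 := by simp [truncGe]
    have hc : const (evalAtPhiX L φ) 0 x = evalAtPhiX L φ x := by simp [const]
    rw [hl, hc, eq_comm, sub_eq_zero]
    simp only [expAdNeg, evalAtPhiX]
    refine tsum_congr fun k => ?_
    rw [dP_iter]
    have hfac : (∏ j ∈ Finset.range k, (((0 : ℤ) + j + 1 : ℤ) : ℝ)) =
        (Nat.factorial k : ℝ) := by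
      have hZ : (∏ j ∈ Finset.range k, ((0 : ℤ) + j + 1)) = (Nat.factorial k : ℤ) := by
        induction k with
        | zero => simp
        | succ k ih =>
            rw [Finset.prod_range_succ, ih, Nat.factorial_succ]
            push_cast
            ring
      rw [← Int.cast_prod, hZ, Int.cast_natCast]
    have htr : truncGe 0 L ((0 : ℤ) + k) x = L (k : ℤ) x := by
      simp [truncGe, Int.ofNat_nonneg]
    rw [hfac, htr]
    have hne : (Nat.factorial k : ℝ) ≠ 0 := by positivity
    field_simp
  · -- 0 < n
    have h1 : (1 : ℤ) ≤ n := hn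
    have h0 : n ≠ 0 := by omega
    have hl : truncGe 1 (expAdNeg φ L) n x = expAdNeg φ L n x := by
      simp [truncGe, h1]
    have hc : const (evalAtPhiX L φ) n x = 0 := by simp [const, h0]
    rw [hl, hc, sub_zero]
    simp only [expAdNeg]
    refine tsum_congr fun k => ?_
    rw [dP_iter, dP_iter]
    have htr : truncGe 0 L (n + k) x = L (n + k) x := by
      have h : (0 : ℤ) ≤ n + k := by positivity
      simp [truncGe, h]
    rw [htr]

end DMKP
end

section
/- Let λ = P + U_2 P^{−1} + U_3 P^{−2} + ⋯ be a Laurent series in P^{−1} with smooth coefficients, φ(T) a smooth function independent of P, and μ := e^{−ad φ}λ. Let A and B be Laurent series, b_0 := (B)_0, and let β(T) and ρ(T) be smooth functions independent of P with ∂_X β = b_0 and ∂_X ρ = res{A, λ}. Define the linearized Miura map G′B := e^{ad φ}B + {β, λ} and its transpose G′^†A := e^{−ad φ}A + P^{−1}ρ. Then res(A · G′B) − res((G′^†A) · B) is a total X-derivative, i.e. there exists a smooth function h(T) with res(A · G′B) − res((G′^†A) · B) = ∂_X h; hence ∫ res(A · G′B) = ∫ res((G′^†A) · B) under the formal integral ∫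 annihilating total X-derivatives. -/
namespace DMKP

variable {N : ℕ}

/-! ### Auxiliary lemmas -/

lemma contDiff_pd [NeZero N] {f : (Fin N → ℝ) → ℝ} (hf : ContDiff ℝ (⊤ : ℕ∞) f) (q : Fin N) :
    ContDiff ℝ (⊤ : ℕ∞) (pd q f) :=
  (hf.fderiv_right (by simp)).clm_apply contDiff_const

lemma pd_mul {f g : (Fin N → ℝ) → ℝ} (hf : ContDiff ℝ (⊤ : ℕ∞) f) (hg : ContDiff ℝ (⊤ : ℕ∞) g)
    (q : Fin N) (x : Fin N → ℝ) :
    pd q (fun y => f y * g y) x = pd q f x * g x + f x * pd q g x := by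
  unfold pd
  rw [fderiv_fun_mul (hf.differentiable (by simp) x) (hg.differentiable (by simp) x)]
  simp
  ring

lemma pd_zero (q : Fin N) (x : Fin N → ℝ) : pd q (0 : (Fin N → ℝ) → ℝ) x = 0 := by
  show fderiv ℝ (fun _ => (0:ℝ)) x (Pi.single q 1) = 0
  simp

lemma pd_neg {f : (Fin N → ℝ) → ℝ} (q : Fin N) (x : Fin N → ℝ) :
    pd q (fun y => -f y) x = -pd q f x := by
  unfold pd
  rw [fderiv_fun_neg]
  simp

lemma pd_sub {f g : (Fin N → ℝ) → ℝ} (hf : ContDiff ℝ (⊤ : ℕ∞) f) (hg : ContDiff ℝ (⊤ : ℕ∞) g)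
    (q : Fin N) (x : Fin N → ℝ) :
    pd q (fun y => f y - g y) x = pd q f x - pd q g x := by
  unfold pd
  rw [fderiv_fun_sub (hf.differentiable (by simp) x) (hg.differentiable (by simp) x)]
  simp

lemma pd_const_mul {f : (Fin N → ℝ) → ℝ} (hf : ContDiff ℝ (⊤ : ℕ∞) f) (c : ℝ) (q : Fin N)
    (x : Fin N → ℝ) : pd q (fun y => c * f y) x = c * pd q f x := by
  unfold pd
  rw [fderiv_const_mul (hf.differentiable (by simp) x)]
  simp

lemma pd_sum {ι : Type*} {s : Finset ι} {f : ι → (Fin N → ℝ) → ℝ}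
    (hf : ∀ i ∈ s, ContDiff ℝ (⊤ : ℕ∞) (f i)) (q : Fin N) (x : Fin N → ℝ) :
    pd q (fun y => ∑ i ∈ s, f i y) x = ∑ i ∈ s, pd q (f i) x := by
  unfold pd
  rw [fderiv_fun_sum (fun i hi => (hf i hi).differentiable (by simp) x)]
  simp

lemma resmul_dP (A B : Coeffs N) (x : Fin N → ℝ) :
    res (mul A (dP B)) x = - res (mul (dP A) B) x := by
  have h1 : (fun i : ℤ => A i x * dP B (-1 - i) x)
      = fun i : ℤ => -((i : ℝ) * A i x * B (-i) x) := by
    funext i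
    show A i x * (((-1 - i + 1 : ℤ) : ℝ) * B (-1 - i + 1) x) = _
    rw [show (-1 - i + 1 : ℤ) = -i by ring]
    push_cast
    ring
  have h2 : (fun i : ℤ => dP A i x * B (-1 - i) x)
      = fun i : ℤ => (fun j : ℤ => (j : ℝ) * A j x * B (-j) x) ((Equiv.addRight (1:ℤ)) i) := by
    funext i
    show ((i + 1 : ℤ) : ℝ) * A (i + 1) x * B (-1 - i) x = _
    simp only [Equiv.coe_addRight]
    rw [show (-(i + 1) : ℤ) = -1 - i by ring]
  show mul A (dP B) (-1) x = - mul (dP A) B (-1) x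
  unfold mul
  have hR : ∑' i : ℤ, dP A i x * B (-1 - i) x = ∑' j : ℤ, (j : ℝ) * A j x * B (-j) x := by
    rw [tsum_congr (fun i => congrFun h2 i)]
    exact Equiv.tsum_eq (Equiv.addRight (1:ℤ)) (fun j : ℤ => (j : ℝ) * A j x * B (-j) x)
  rw [tsum_congr (fun i => congrFun h1 i), tsum_neg, hR]

lemma resmul_dPk (k : ℕ) : ∀ (A B : Coeffs N) (x : Fin N → ℝ),
    res (mul A (dP^[k] B)) x = (-1 : ℝ)^k * res (mul (dP^[k] A) B) x := by
  induction k with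
  | zero => intro A B x; simp
  | succ k ih =>
    intro A B x
    rw [Function.iterate_succ_apply' (f := dP) (n := k) (x := B)]
    rw [resmul_dP A (dP^[k] B) x, ih (dP A) B x,
      ← Function.iterate_succ_apply (f := dP) (n := k) (x := A)]
    ring

lemma dPk_bdd {A : Coeffs N} {m : ℤ} (hA : ∀ n : ℤ, m < n → A n = 0) (k : ℕ) :
    ∀ n : ℤ, m < n + k → dP^[k] A n = 0 := by
  induction k with
  | zero => intro n hn; simpa using hA n (by simpa using hn)
  | succ k ih =>
    intro n hn
    rw [Function.iterate_succ_apply' (f := dP) (n := k) (x := A)]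
    show (fun x => ((n + 1 : ℤ) : ℝ) * (dP^[k] A) (n + 1) x) = 0
    funext x
    rw [ih (n + 1) (by push_cast at hn ⊢; omega)]
    simp

lemma expAdPos_bdd [NeZero N] {B : Coeffs N} {m : ℤ} (hB : ∀ n : ℤ, m < n → B n = 0)
    (φ : (Fin N → ℝ) → ℝ) : ∀ n : ℤ, m < n → ∀ x, expAdPos φ B n x = 0 := by
  intro n hn x
  unfold expAdPos
  have hz : ∀ k : ℕ, (-(pd 0 φ x)) ^ k / (Nat.factorial k : ℝ) * (dP^[k] B) n x = 0 := by
    intro k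
    rw [dPk_bdd hB k n (by omega)]
    simp
  rw [tsum_congr hz]
  exact tsum_zero

lemma expAdNeg_bdd [NeZero N] {B : Coeffs N} {m : ℤ} (hB : ∀ n : ℤ, m < n → B n = 0)
    (φ : (Fin N → ℝ) → ℝ) : ∀ n : ℤ, m < n → ∀ x, expAdNeg φ B n x = 0 := by
  intro n hn x
  unfold expAdNeg
  have hz : ∀ k : ℕ, (pd 0 φ x) ^ k / (Nat.factorial k : ℝ) * (dP^[k] B) n x = 0 := by
    intro k
    rw [dPk_bdd hB k n (by omega)]
    simp
  rw [tsum_congr hz]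
  exact tsum_zero

end DMKP

namespace DMKP

lemma pb_const_eq [NeZero N] {lam : Coeffs N} {β : (Fin N → ℝ) → ℝ} {B : Coeffs N}
    (hβX : pd 0 β = B 0) (n : ℤ) (x : Fin N → ℝ) :
    pb (const β) lam n x = -(B 0 x) * dP lam n x := by
  unfold pb
  have h1 : mul (dP (const β)) (dX lam) n x = 0 := by
    unfold mul
    have hz : ∀ i : ℤ, dP (const β) i x * dX lam (n - i) x = 0 := by
      intro i
      show ((i + 1 : ℤ) : ℝ) * (const β) (i + 1) x * dX lam (n - i) x = 0
      by_cases hi : i + 1 = 0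
      · rw [hi]; simp
      · rw [show (const β) (i + 1) = 0 from if_neg hi]; simp
    rw [tsum_congr hz]
    exact tsum_zero
  have h2 : mul (dX (const β)) (dP lam) n x = B 0 x * dP lam n x := by
    unfold mul
    rw [tsum_eq_single 0 ?_]
    · show pd 0 ((const β) 0) x * dP lam (n - 0) x = _
      rw [show (const β) 0 = β from if_pos rfl, hβX, sub_zero]
    · intro i hi
      show pd 0 ((const β) i) x * dP lam (n - i) x = 0
      rw [show (const β) i = 0 from if_neg hi, pd_zero]
      simp
  rw [h1, h2]
  ring


/-- Theorem 8: with `G′B = e^{ad φ}B + {∫^X b₀, λ}` and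
`G′†A = e^{-ad φ}A + P⁻¹ ∫^X res{A,λ}` (where `∂_X β = b₀ = (B)₀` and
`∂_X ρ = res{A,λ}`), the difference `res(A·G′B) - res((G′†A)·B)` is a total
`X`-derivative of a smooth function. -/
theorem statement11 {N : ℕ} [NeZero N] (lam : Coeffs N) (hshape : IsDKPShape lam)
    (hlam : IsLaurent lam)
    (φ : (Fin N → ℝ) → ℝ) (hφ : ContDiff ℝ (⊤ : ℕ∞) φ)
    (A B : Coeffs N) (hA : IsLaurent A) (hB : IsLaurent B)
    (β ρ : (Fin N → ℝ) → ℝ) (hβ : ContDiff ℝ (⊤ : ℕ∞) β) (hρ : ContDiff ℝ (⊤ : ℕ∞) ρ)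
    (hβX : pd 0 β = B 0) (hρX : pd 0 ρ = res (pb A lam)) :
    ∃ h : (Fin N → ℝ) → ℝ, ContDiff ℝ (⊤ : ℕ∞) h ∧
      ∀ x : Fin N → ℝ,
        res (mul A (fun n y => expAdPos φ B n y + pb (const β) lam n y)) x
          - res (mul (fun n y => expAdNeg φ A n y + (if n = -1 then ρ y else 0)) B) x
        = pd 0 h x := by

  obtain ⟨⟨mA0, hmA0⟩, hAs⟩ := hA
  obtain ⟨⟨mB0, hmB0⟩, hBs⟩ := hB
  set mA : ℤ := max mA0 0 with hmAdef
  set mB : ℤ := max mB0 0 with hmBdef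
  have hmA : ∀ n : ℤ, mA < n → A n = 0 := fun n hn => hmA0 n (lt_of_le_of_lt (le_max_left _ _) hn)
  have hmB : ∀ n : ℤ, mB < n → B n = 0 := fun n hn => hmB0 n (lt_of_le_of_lt (le_max_left _ _) hn)
  have hmAnn : (0 : ℤ) ≤ mA := le_max_right _ _
  have hmBnn : (0 : ℤ) ≤ mB := le_max_right _ _
  have hlamz : ∀ n : ℤ, (1 : ℤ) < n → lam n = 0 := fun n hn => hshape.2.2 n (by omega)
  set S : Finset ℤ := Finset.Icc (-1 - mB) mA with hSdef
  set SG : Finset ℤ := Finset.Icc (-1 : ℤ) mA with hSGdef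
  set K : ℕ := (mA + mB + 2).toNat with hKdef
  have hKge : ∀ k : ℕ, k ∉ Finset.range K → (mA + mB + 1 : ℤ) < k := by
    intro k hk
    rw [Finset.mem_range, not_lt] at hk
    have h1 : (K : ℤ) ≤ k := Int.ofNat_le.mpr hk
    have h2 : (mA + mB + 2 : ℤ) ≤ (K : ℤ) := by
      rw [hKdef]; exact Int.self_le_toNat _
    omega
  have hdPlamz : ∀ n : ℤ, (0 : ℤ) < n → ∀ y, dP lam n y = 0 := by
    intro n hn y
    show ((n + 1 : ℤ) : ℝ) * lam (n + 1) y = 0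
    rw [hlamz (n + 1) (by omega)]
    simp
  have hdPlam : ∀ m : ℤ, ContDiff ℝ (⊤ : ℕ∞) (dP lam m) := by
    intro m
    exact contDiff_const.mul (hlam.2 (m + 1))
  have hterm : ∀ i : ℤ, ContDiff ℝ (⊤ : ℕ∞) (fun y => A i y * dP lam (-1 - i) y) :=
    fun i => (hAs i).mul (hdPlam _)
  set Sg : (Fin N → ℝ) → ℝ := fun y => ∑ i ∈ SG, A i y * dP lam (-1 - i) y with hSgdef
  have hSg : ContDiff ℝ (⊤ : ℕ∞) Sg := ContDiff.sum (fun i _ => hterm i)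
  refine ⟨fun y => -(ρ y * β y) - β y * Sg y,
    ((hρ.mul hβ).neg).sub (hβ.mul hSg), ?_⟩
  intro x
  -- support lemmas
  have suppAE : ∀ i : ℤ, i ∉ S → A i x * expAdPos φ B (-1 - i) x = 0 := by
    intro i hi
    rw [hSdef, Finset.mem_Icc, not_and_or] at hi
    rcases hi with hi | hi
    · rw [expAdPos_bdd hmB φ (-1 - i) (by omega) x]; ring
    · rw [hmA i (by omega)]; simp
  have suppEB : ∀ i : ℤ, i ∉ S → expAdNeg φ A i x * B (-1 - i) x = 0 := by
    intro i hi
    rw [hSdef, Finset.mem_Icc, not_and_or] at hi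
    rcases hi with hi | hi
    · rw [hmB (-1 - i) (by omega)]; simp
    · rw [expAdNeg_bdd hmA φ i (by omega) x]; ring
  -- Part I
  have partI : res (mul A (expAdPos φ B)) x = res (mul (expAdNeg φ A) B) x := by
    have hL : res (mul A (expAdPos φ B)) x
        = ∑ k ∈ Finset.range K, (-(pd 0 φ x)) ^ k / (Nat.factorial k : ℝ)
            * ((-1 : ℝ) ^ k * res (mul (dP^[k] A) B) x) := by
      have e0 : res (mul A (expAdPos φ B)) x
          = ∑ i ∈ S, A i x * expAdPos φ B (-1 - i) x := tsum_eq_sum suppAE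
      have step1 : ∀ i ∈ S, A i x * expAdPos φ B (-1 - i) x
          = ∑ k ∈ Finset.range K, A i x * ((-(pd 0 φ x)) ^ k / (Nat.factorial k : ℝ)
              * (dP^[k] B) (-1 - i) x) := by
        intro i hi
        rw [hSdef, Finset.mem_Icc] at hi
        have e1 : expAdPos φ B (-1 - i) x = ∑ k ∈ Finset.range K,
            (-(pd 0 φ x)) ^ k / (Nat.factorial k : ℝ) * (dP^[k] B) (-1 - i) x := by
          refine tsum_eq_sum ?_
          intro k hk
          rw [dPk_bdd hmB k (-1 - i) (by have := hKge k hk; omega)]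
          simp
        rw [e1, Finset.mul_sum]
      rw [e0, Finset.sum_congr rfl step1, Finset.sum_comm]
      refine Finset.sum_congr rfl ?_
      intro k _
      have hsupp : ∀ i : ℤ, i ∉ S → A i x * (dP^[k] B) (-1 - i) x = 0 := by
        intro i hi
        rw [hSdef, Finset.mem_Icc, not_and_or] at hi
        rcases hi with hi | hi
        · rw [dPk_bdd hmB k (-1 - i) (by omega)]; simp
        · rw [hmA i (by omega)]; simp
      have e2 : (∑ i ∈ S, A i x * (dP^[k] B) (-1 - i) x) = res (mul A (dP^[k] B)) x :=
        (tsum_eq_sum hsupp).symm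
      have e3 : ∀ i ∈ S, A i x * ((-(pd 0 φ x)) ^ k / (Nat.factorial k : ℝ)
            * (dP^[k] B) (-1 - i) x)
          = (-(pd 0 φ x)) ^ k / (Nat.factorial k : ℝ) * (A i x * (dP^[k] B) (-1 - i) x) := by
        intro i _; ring
      rw [Finset.sum_congr rfl e3, ← Finset.mul_sum, e2, resmul_dPk k A B x]
    have hR : res (mul (expAdNeg φ A) B) x
        = ∑ k ∈ Finset.range K, (pd 0 φ x) ^ k / (Nat.factorial k : ℝ)
            * res (mul (dP^[k] A) B) x := by
      have e0 : res (mul (expAdNeg φ A) B) x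
          = ∑ i ∈ S, expAdNeg φ A i x * B (-1 - i) x := tsum_eq_sum suppEB
      have step1 : ∀ i ∈ S, expAdNeg φ A i x * B (-1 - i) x
          = ∑ k ∈ Finset.range K, ((pd 0 φ x) ^ k / (Nat.factorial k : ℝ)
              * (dP^[k] A) i x) * B (-1 - i) x := by
        intro i hi
        rw [hSdef, Finset.mem_Icc] at hi
        have e1 : expAdNeg φ A i x = ∑ k ∈ Finset.range K,
            (pd 0 φ x) ^ k / (Nat.factorial k : ℝ) * (dP^[k] A) i x := by
          refine tsum_eq_sum ?_
          intro k hk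
          rw [dPk_bdd hmA k i (by have := hKge k hk; omega)]
          simp
        rw [e1, Finset.sum_mul]
      rw [e0, Finset.sum_congr rfl step1, Finset.sum_comm]
      refine Finset.sum_congr rfl ?_
      intro k _
      have hsupp : ∀ i : ℤ, i ∉ S → (dP^[k] A) i x * B (-1 - i) x = 0 := by
        intro i hi
        rw [hSdef, Finset.mem_Icc, not_and_or] at hi
        rcases hi with hi | hi
        · rw [hmB (-1 - i) (by omega)]; simp
        · rw [dPk_bdd hmA k i (by omega)]; simp
      have e2 : (∑ i ∈ S, (dP^[k] A) i x * B (-1 - i) x) = res (mul (dP^[k] A) B) x :=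
        (tsum_eq_sum hsupp).symm
      have e3 : ∀ i ∈ S, ((pd 0 φ x) ^ k / (Nat.factorial k : ℝ) * (dP^[k] A) i x)
            * B (-1 - i) x
          = (pd 0 φ x) ^ k / (Nat.factorial k : ℝ) * ((dP^[k] A) i x * B (-1 - i) x) := by
        intro i _; ring
      rw [Finset.sum_congr rfl e3, ← Finset.mul_sum, e2]
    rw [hL, hR]
    refine Finset.sum_congr rfl ?_
    intro k _
    rw [neg_pow]
    ring_nf
    rw [mul_comm k 2, pow_mul, neg_one_sq, one_pow, mul_one]
  -- Step A : split the first residue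
  have stepA : res (mul A (fun n y => expAdPos φ B n y + pb (const β) lam n y)) x
      = res (mul A (expAdPos φ B)) x + (-(B 0 x) * Sg x) := by
    have supp : ∀ i : ℤ, i ∉ S →
        A i x * (expAdPos φ B (-1 - i) x + pb (const β) lam (-1 - i) x) = 0 := by
      intro i hi
      rw [hSdef, Finset.mem_Icc, not_and_or] at hi
      rcases hi with hi | hi
      · rw [expAdPos_bdd hmB φ (-1 - i) (by omega) x, pb_const_eq hβX,
          hdPlamz (-1 - i) (by omega) x]
        ring
      · rw [hmA i (by omega)]; simp
    have e0 : res (mul A (fun n y => expAdPos φ B n y + pb (const β) lam n y)) x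
        = ∑ i ∈ S, A i x * (expAdPos φ B (-1 - i) x + pb (const β) lam (-1 - i) x) :=
      tsum_eq_sum supp
    have split : ∀ i ∈ S, A i x * (expAdPos φ B (-1 - i) x + pb (const β) lam (-1 - i) x)
        = A i x * expAdPos φ B (-1 - i) x
          + (-(B 0 x)) * (A i x * dP lam (-1 - i) x) := by
      intro i _
      rw [pb_const_eq hβX]
      ring
    rw [e0, Finset.sum_congr rfl split, Finset.sum_add_distrib, ← Finset.mul_sum]
    congr 1
    · exact (tsum_eq_sum suppAE).symm
    · have hsub : SG ⊆ S := by
        rw [hSdef, hSGdef]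
        exact Finset.Icc_subset_Icc (by omega) le_rfl
      congr 1
      rw [hSgdef]
      refine (Finset.sum_subset hsub ?_).symm
      intro i hiS hiSG
      rw [hSdef, Finset.mem_Icc] at hiS
      rw [hSGdef, Finset.mem_Icc, not_and_or] at hiSG
      rw [hdPlamz (-1 - i) (by omega) x]
      ring
  -- Step B : split the second residue
  have stepB : res (mul (fun n y => expAdNeg φ A n y + (if n = -1 then ρ y else 0)) B) x
      = res (mul (expAdNeg φ A) B) x + ρ x * B 0 x := by
    have supp : ∀ i : ℤ, i ∉ S →
        (expAdNeg φ A i x + (if i = -1 then ρ x else 0)) * B (-1 - i) x = 0 := by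
      intro i hi
      rw [hSdef, Finset.mem_Icc, not_and_or] at hi
      rcases hi with hi | hi
      · rw [hmB (-1 - i) (by omega)]; simp
      · rw [expAdNeg_bdd hmA φ i (by omega) x, if_neg (by omega)]
        simp
    have e0 : res (mul (fun n y => expAdNeg φ A n y + (if n = -1 then ρ y else 0)) B) x
        = ∑ i ∈ S, (expAdNeg φ A i x + (if i = -1 then ρ x else 0)) * B (-1 - i) x :=
      tsum_eq_sum supp
    have split : ∀ i ∈ S, (expAdNeg φ A i x + (if i = -1 then ρ x else 0)) * B (-1 - i) x
        = expAdNeg φ A i x * B (-1 - i) x + (if i = -1 then ρ x else 0) * B (-1 - i) x := by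
      intro i _; ring
    rw [e0, Finset.sum_congr rfl split, Finset.sum_add_distrib]
    congr 1
    · exact (tsum_eq_sum suppEB).symm
    · rw [Finset.sum_eq_single_of_mem (-1 : ℤ) ?_ ?_]
      · rw [if_pos rfl]
        norm_num
      · rw [hSdef, Finset.mem_Icc]
        omega
      · intro i _ hi
        rw [if_neg hi]
        ring
  -- derivative of Sg
  have hpdSg : pd 0 Sg x = mul (dX A) (dP lam) (-1) x - mul (dP A) (dX lam) (-1) x := by
    have e0 : pd 0 Sg x = ∑ i ∈ SG, pd 0 (fun y => A i y * dP lam (-1 - i) y) x :=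
      pd_sum (fun i _ => hterm i) 0 x
    have split : ∀ i ∈ SG, pd 0 (fun y => A i y * dP lam (-1 - i) y) x
        = pd 0 (A i) x * dP lam (-1 - i) x + A i x * (dP (dX lam)) (-1 - i) x := by
      intro i _
      rw [pd_mul (hAs i) (hdPlam _)]
      congr 1
      have e1 : pd 0 (dP lam (-1 - i)) x
          = ((-1 - i + 1 : ℤ) : ℝ) * pd 0 (lam (-1 - i + 1)) x :=
        pd_const_mul (hlam.2 _) _ _ _
      rw [e1]
      rfl
    have h1 : (∑ i ∈ SG, pd 0 (A i) x * dP lam (-1 - i) x)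
        = mul (dX A) (dP lam) (-1) x := by
      refine (tsum_eq_sum ?_).symm
      intro i hi
      rw [hSGdef, Finset.mem_Icc, not_and_or] at hi
      rcases hi with hi | hi
      · show pd 0 (A i) x * dP lam (-1 - i) x = 0
        rw [hdPlamz (-1 - i) (by omega) x]
        ring
      · show pd 0 (A i) x * dP lam (-1 - i) x = 0
        rw [hmA i (by omega), pd_zero]
        ring
    have h2 : (∑ i ∈ SG, A i x * (dP (dX lam)) (-1 - i) x)
        = mul A (dP (dX lam)) (-1) x := by
      refine (tsum_eq_sum ?_).symm
      intro i hi
      rw [hSGdef, Finset.mem_Icc, not_and_or] at hi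
      rcases hi with hi | hi
      · have e2 : (dP (dX lam)) (-1 - i) x
            = ((-1 - i + 1 : ℤ) : ℝ) * pd 0 (lam (-1 - i + 1)) x := rfl
        rw [e2, hlamz (-1 - i + 1) (by omega), pd_zero]
        ring
      · rw [hmA i (by omega)]
        simp
    have h3 : res (mul A (dP (dX lam))) x = - res (mul (dP A) (dX lam)) x :=
      resmul_dP A (dX lam) x
    have h3' : mul A (dP (dX lam)) (-1) x = - mul (dP A) (dX lam) (-1) x := h3
    rw [e0, Finset.sum_congr rfl split, Finset.sum_add_distrib, h1, h2, h3']
    ring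
  have hpdrho : pd 0 ρ x = mul (dP A) (dX lam) (-1) x - mul (dX A) (dP lam) (-1) x := by
    rw [hρX]
    rfl
  -- final assembly
  rw [stepA, stepB, partI]
  have hpdh : pd 0 (fun y => -(ρ y * β y) - β y * Sg y) x
      = -(pd 0 ρ x * β x + ρ x * pd 0 β x) - (pd 0 β x * Sg x + β x * pd 0 Sg x) := by
    rw [pd_sub ((hρ.mul hβ).neg) (hβ.mul hSg)]
    congr 1
    · rw [show (fun y => -(ρ y * β y)) = fun y => -((fun z => ρ z * β z) y) from rfl,
        pd_neg, pd_mul hρ hβ]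
    · exact pd_mul hβ hSg 0 x
  rw [hpdh, hpdSg, hpdrho]
  have hb0 : pd 0 β x = B 0 x := congrFun hβX x
  rw [hb0]
  ring


end DMKP
end
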